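/- arXiv:2504.00868 — 2 statements merged into one kernel-verified Lean document; each statement's English description precedes it below -/
import Mathlib

section
/- Let F be a field and α, β, γ ∈ F with αβγ ≠ 0. Then the algebra C(α,β,γ) is isomorphic to the algebra C(ρ), where ρ = α⁻¹βγ. -/
open Module

section Defs

variable (F : Type*) [Field F]

/-- `I` is a (two-sided) ideal of the algebra `(A, mul)`. -/
def IsIdeal {A : Type*} [AddCommGroup A] [Module F A]
    (mul : A → A → A) (I : Submodule F A) : Prop :=
  ∀ a : A, ∀ u ∈ I, mul a u ∈ I ∧ mul u a ∈ I

/-- The (not necessarily associative or unital) algebra `(A, mul)` is simple: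
its multiplication is nonzero and its only ideals are `⊥` and `⊤`. -/
def IsSimpleAlg {A : Type*} [AddCommGroup A] [Module F A]
    (mul : A → A → A) : Prop :=
  (∃ u v : A, mul u v ≠ 0) ∧
  ∀ I : Submodule F A, IsIdeal F mul I → I = ⊥ ∨ I = ⊤

/-- The algebra `(A, mul)` has nil-rank `k`: there are `k` linearly independent
nil-elements of index 2, but no `k + 1` such elements. -/
def HasNilRank {A : Type*} [AddCommGroup A] [Module F A]
    (mul : A → A → A) (k : ℕ) : Prop :=
  (∃ v : Fin k → A, LinearIndependent F v ∧ ∀ i, mul (v i) (v i) = 0) ∧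
  ∀ v : Fin (k + 1) → A, LinearIndependent F v → ∃ i, mul (v i) (v i) ≠ 0

/-- The algebras `(A, mulA)` and `(B, mulB)` are isomorphic. -/
def AlgIso {A B : Type*} [AddCommGroup A] [Module F A] [AddCommGroup B] [Module F B]
    (mulA : A → A → A) (mulB : B → B → B) : Prop :=
  ∃ φ : A ≃ₗ[F] B, ∀ u v : A, φ (mulA u v) = mulB (φ u) (φ v)

/-- The algebras `(A, mulA)` and `(B, mulB)` are isotopic. -/
def Isotopic {A B : Type*} [AddCommGroup A] [Module F A] [AddCommGroup B] [Module F B]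
    (mulA : A → A → A) (mulB : B → B → B) : Prop :=
  ∃ φ ψ ξ : A ≃ₗ[F] B, ∀ u v : A, mulB (φ u) (ψ v) = ξ (mulA u v)

/-- `(e, x, y)` is a canonical basis of `A` realizing the unital commutative algebra
`C(α, β, γ)`: `e` is a multiplicative identity, `x² = y² = 0`,
and `xy = yx = α·1 + β·x + γ·y`. (`C(1,0,0)` is the Jordan algebra `J₂`.) -/
def IsCAlg {A : Type*} [AddCommGroup A] [Module F A]
    (m : A →ₗ[F] A →ₗ[F] A) (α β γ : F) (e x y : A) : Prop :=
  LinearIndependent F ![e, x, y] ∧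
  Submodule.span F {e, x, y} = ⊤ ∧
  (∀ u, m e u = u) ∧ (∀ u, m u e = u) ∧
  m x x = 0 ∧ m y y = 0 ∧
  m x y = α • e + β • x + γ • y ∧ m y x = α • e + β • x + γ • y

end Defs

/-!
Scaling `x` by `s` and `y` by `t` turns the structure constants `(α, β, γ)` of
`C(α, β, γ)` into `(stα, tβ, sγ)`; for `s = β/α`, `t = γ/α` all three become
`ρ = βγ/α`. An algebra with a basis `(1, x, y)` is determined up to isomorphism by its structure
constants, so `C(α, β, γ) ≅ C(ρ)`.
-/

namespace IsCAlg

variable {F A B : Type*} [Field F] [AddCommGroup A] [Module F A] [AddCommGroup B]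
  [Module F B] {m : A →ₗ[F] A →ₗ[F] A} {m' : B →ₗ[F] B →ₗ[F] B} {α β γ : F}
  {e x y : A} {e' x' y' : B}

noncomputable def basis (hA : IsCAlg F m α β γ e x y) : Basis (Fin 3) F A :=
  Basis.mk hA.1 <| by
    rw [Matrix.range_cons, Matrix.range_cons_cons_empty, Set.singleton_union, hA.2.1]

@[simp]
theorem basis_apply (hA : IsCAlg F m α β γ e x y) (i : Fin 3) : hA.basis i = ![e, x, y] i :=
  Basis.mk_apply _ _ i

theorem rescale (hA : IsCAlg F m α β γ e x y) {s t : F} (hs : s ≠ 0) (ht : t ≠ 0) :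
    IsCAlg F m (s * t * α) (t * β) (s * γ) e (s • x) (t • y) := by
  have hv : ![e, s • x, t • y] = ![1, Units.mk0 s hs, Units.mk0 t ht] • ⇑hA.basis := by
    ext i; fin_cases i <;> simp
  have hli : LinearIndependent F ![e, s • x, t • y] :=
    hv ▸ hA.basis.linearIndependent.units_smul _
  have hsp : Submodule.span F {e, s • x, t • y} = ⊤ := by
    have := Basis.units_smul_span_eq_top hA.basis.span_eq
      (w := ![1, Units.mk0 s hs, Units.mk0 t ht])
    rwa [← hv, Matrix.range_cons, Matrix.range_cons_cons_empty, Set.singleton_union] at this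
  obtain ⟨-, -, hel, her, hxx, hyy, hxy, hyx⟩ := hA
  refine ⟨hli, hsp, hel, her, ?_, ?_, ?_, ?_⟩
  · simp [hxx]
  · simp [hyy]
  · simp [hxy, smul_smul]; module
  · simp [hyx, smul_smul]; module

theorem algIso (hA : IsCAlg F m α β γ e x y) (hB : IsCAlg F m' α β γ e' x' y') :
    AlgIso F (fun u v : A => m u v) (fun u v : B => m' u v) := by
  let φ := hA.basis.equiv hB.basis (Equiv.refl _)
  have hφe : φ e = e' := by simpa using hA.basis.equiv_apply 0 hB.basis (Equiv.refl _)
  have hφx : φ x = x' := by simpa using hA.basis.equiv_apply 1 hB.basis (Equiv.refl _)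
  have hφy : φ y = y' := by simpa using hA.basis.equiv_apply 2 hB.basis (Equiv.refl _)
  have hm : m.compr₂ φ.toLinearMap = m'.compl₁₂ φ.toLinearMap φ.toLinearMap := by
    refine LinearMap.ext_basis hA.basis hA.basis fun i j => ?_
    obtain ⟨-, -, hel, her, hxx, hyy, hxy, hyx⟩ := id hA
    obtain ⟨-, -, hel', her', hxx', hyy', hxy', hyx'⟩ := id hB
    fin_cases i <;> fin_cases j <;>
      simp [hel, her, hxx, hyy, hxy, hyx, hel', her', hxx', hyy', hxy', hyx', hφe, hφx, hφy]
  exact ⟨φ, fun u v => congr($hm u v)⟩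

end IsCAlg

/-- If `αβγ ≠ 0`, then `C(α, β, γ)` is isomorphic to `C(ρ)` with
`ρ = α⁻¹βγ` (where `C(ρ) = C(ρ, ρ, ρ)`). -/
theorem stmt8 {F : Type*} [Field F] (α β γ : F) (h : α * β * γ ≠ 0)
    {A : Type*} [AddCommGroup A] [Module F A]
    (m : A →ₗ[F] A →ₗ[F] A) (e x y : A)
    (hA : IsCAlg F m α β γ e x y)
    {B : Type*} [AddCommGroup B] [Module F B]
    (m' : B →ₗ[F] B →ₗ[F] B) (e' x' y' : B)
    (hB : IsCAlg F m' (α⁻¹ * β * γ) (α⁻¹ * β * γ) (α⁻¹ * β * γ) e' x' y') :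
    AlgIso F (fun u v : A => m u v) (fun u v : B => m' u v) := by
  have hαβ := left_ne_zero_of_mul h
  have hα : α ≠ 0 := left_ne_zero_of_mul hαβ
  have hβ : β ≠ 0 := right_ne_zero_of_mul hαβ
  have hγ : γ ≠ 0 := right_ne_zero_of_mul h
  have hρ := hA.rescale (s := α⁻¹ * β) (t := α⁻¹ * γ)
    (mul_ne_zero (inv_ne_zero hα) hβ) (mul_ne_zero (inv_ne_zero hα) hγ)
  rw [show α⁻¹ * β * (α⁻¹ * γ) * α = α⁻¹ * β * γ by field_simp,
    show α⁻¹ * γ * β = α⁻¹ * β * γ by ring] at hρ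
  exact hρ.algIso hB
end

section
/- Let F be an algebraically closed field of characteristic ≠ 2. Every simple commutative 3-dimensional algebra over F possessing a nil-basis (a basis consisting of nil-elements of index 2) has a standard isotope isomorphic to the algebra C(−2). -/
open Module

/-!
If `n₀, n₁, n₂` is a nil-basis of a commutative algebra, the whole multiplication table is
determined by the three products `n₀n₁, n₀n₂, n₁n₂`; for a simple algebra these span `A² = A`,
so they form a second basis. Given two algebras with such data, let `φ` match the product bases
and let `f` send `φ⁻¹` of the nil-basis of the second algebra to the nil-basis of the first:
then `φ (f u * f v) = φ u * φ v` on basis vectors, hence everywhere, and `φ` is an isomorphism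
from the standard isotope `A^(f,f)` onto the second algebra. In `C(-2)` the triple
`x, y, 2·1 + x + y` is a nil-basis whose products `-2(1 + x + y), -2(1 + y), -2(1 + x)` span
once `2 ≠ 0`.
-/

open Submodule

section NilBasis

variable {F : Type*} [Field F] {A B : Type*} [AddCommGroup A] [Module F A]
  [AddCommGroup B] [Module F B]

theorem exists_algIso_isotope_of_map_basis {ι : Type*}
    {mA : A →ₗ[F] A →ₗ[F] A} {mB : B →ₗ[F] B →ₗ[F] B} (a : Basis ι F A) (b : Basis ι F B)
    (φ : A ≃ₗ[F] B) (hφ : ∀ i j, φ (mA (a i) (a j)) = mB (b i) (b j)) :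
    ∃ f : A ≃ₗ[F] A, AlgIso F (fun u v => mA (f u) (f v)) (fun u v => mB u v) := by
  let c := b.map φ.symm
  let f := c.equiv a (Equiv.refl ι)
  have hfc : ∀ i, f (c i) = a i := fun i => c.equiv_apply i a _
  have hφc : ∀ i, φ (c i) = b i := fun i => by simp [c]
  have h : (mA.compl₁₂ (f : A →ₗ[F] A) (f : A →ₗ[F] A)).compr₂ (φ : A →ₗ[F] B) =
      mB.compl₁₂ (φ : A →ₗ[F] B) (φ : A →ₗ[F] B) :=
    LinearMap.ext_basis c c fun i j => by simp [hfc, hφc, hφ]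
  exact ⟨f, φ, fun u v => LinearMap.congr_fun₂ h u v⟩

theorem IsSimpleAlg.map₂_eq_top {m : A →ₗ[F] A →ₗ[F] A}
    (hsimple : IsSimpleAlg F (fun u v : A => m u v)) : map₂ m ⊤ ⊤ = ⊤ := by
  have hideal : IsIdeal F (fun u v : A => m u v) (map₂ m ⊤ ⊤) := fun a u _ =>
    ⟨apply_mem_map₂ m mem_top mem_top, apply_mem_map₂ m mem_top mem_top⟩
  refine (hsimple.2 _ hideal).resolve_left fun hbot => ?_
  obtain ⟨u, v, huv⟩ := hsimple.1
  exact huv ((mem_bot F).1 (hbot ▸ apply_mem_map₂ m mem_top mem_top))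

def nilProducts (m : A →ₗ[F] A →ₗ[F] A) (v : Fin 3 → A) : Fin 3 → A :=
  ![m (v 0) (v 1), m (v 0) (v 2), m (v 1) (v 2)]

variable {m : A →ₗ[F] A →ₗ[F] A} {v : Fin 3 → A}

theorem mul_mem_span_nilProducts (hcomm : ∀ u w : A, m u w = m w u)
    (hnil : ∀ i, m (v i) (v i) = 0) (i j : Fin 3) :
    m (v i) (v j) ∈ span F (Set.range (nilProducts m v)) := by
  rcases eq_or_ne i j with rfl | hij
  · simp [hnil]
  refine subset_span ?_
  fin_cases i <;> fin_cases j <;>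
    simp_all [nilProducts, hcomm (v 1) (v 0), hcomm (v 2) (v 0), hcomm (v 2) (v 1)]

theorem span_nilProducts_eq_top (hsimple : IsSimpleAlg F (fun u w : A => m u w))
    (hcomm : ∀ u w : A, m u w = m w u) (hspan : span F (Set.range v) = ⊤)
    (hnil : ∀ i, m (v i) (v i) = 0) : span F (Set.range (nilProducts m v)) = ⊤ := by
  rw [eq_top_iff, ← hsimple.map₂_eq_top, ← hspan, map₂_span_span, span_le]
  rintro _ ⟨_, ⟨i, rfl⟩, _, ⟨j, rfl⟩, rfl⟩
  exact mul_mem_span_nilProducts hcomm hnil i j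

theorem map_mul_eq_of_map_nilProducts {mB : B →ₗ[F] B →ₗ[F] B} {w : Fin 3 → B}
    (hcomm : ∀ u w : A, m u w = m w u) (hcommB : ∀ u w' : B, mB u w' = mB w' u)
    (hnil : ∀ i, m (v i) (v i) = 0) (hnilB : ∀ i, mB (w i) (w i) = 0) (φ : A →ₗ[F] B)
    (hφ : ∀ k, φ (nilProducts m v k) = nilProducts mB w k) (i j : Fin 3) :
    φ (m (v i) (v j)) = mB (w i) (w j) := by
  rcases eq_or_ne i j with rfl | hij
  · simp [hnil, hnilB]
  have h₀ := hφ 0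
  have h₁ := hφ 1
  have h₂ := hφ 2
  fin_cases i <;> fin_cases j <;>
    simp_all [nilProducts, hcomm (v 1) (v 0), hcomm (v 2) (v 0), hcomm (v 2) (v 1),
      hcommB (w 1) (w 0), hcommB (w 2) (w 0), hcommB (w 2) (w 1)]

theorem exists_algIso_isotope_of_nilBasis {mA : A →ₗ[F] A →ₗ[F] A} {mB : B →ₗ[F] B →ₗ[F] B}
    (hcommA : ∀ u w : A, mA u w = mA w u) (hcommB : ∀ u w : B, mB u w = mB w u)
    (a : Basis (Fin 3) F A) (b : Basis (Fin 3) F B)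
    (hnilA : ∀ i, mA (a i) (a i) = 0) (hnilB : ∀ i, mB (b i) (b i) = 0)
    (hspanA : span F (Set.range (nilProducts mA a)) = ⊤)
    (hspanB : span F (Set.range (nilProducts mB b)) = ⊤) :
    ∃ f : A ≃ₗ[F] A, AlgIso F (fun u v => mA (f u) (f v)) (fun u v => mB u v) := by
  let pA := basisOfTopLeSpanOfCardEqFinrank _ hspanA.ge (finrank_eq_card_basis a).symm
  let pB := basisOfTopLeSpanOfCardEqFinrank _ hspanB.ge (finrank_eq_card_basis b).symm
  let φ := pA.equiv pB (Equiv.refl _)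
  have hφ : ∀ k, φ (nilProducts mA a k) = nilProducts mB b k := fun k => by
    simpa [pA, pB] using pA.equiv_apply k pB (Equiv.refl _)
  exact exists_algIso_isotope_of_map_basis a b φ
    (map_mul_eq_of_map_nilProducts hcommA hcommB hnilA hnilB φ hφ)

end NilBasis

section CAlg

variable {F : Type*} [Field F] {A : Type*} [AddCommGroup A] [Module F A]
  {m : A →ₗ[F] A →ₗ[F] A} {α β γ : F} {e x y : A}

noncomputable def IsCAlg.basis_s17 (h : IsCAlg F m α β γ e x y) : Basis (Fin 3) F A :=
  Basis.mk h.1 <| by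
    rw [← h.2.1, span_le]
    rintro _ (rfl | rfl | rfl) <;> exact subset_span (by simp)

theorem IsCAlg.coe_basis (h : IsCAlg F m α β γ e x y) : ⇑h.basis_s17 = ![e, x, y] :=
  Basis.coe_mk _ _

theorem IsCAlg.comm (h : IsCAlg F m α β γ e x y) (u v : A) : m u v = m v u := by
  have hflip : m = m.flip := LinearMap.ext_basis h.basis_s17 h.basis_s17 fun i j => by
    rw [h.coe_basis]
    obtain ⟨-, -, hel, her, hxx, hyy, hxy, hyx⟩ := h
    fin_cases i <;> fin_cases j <;> simp [*]
  exact LinearMap.congr_fun₂ hflip u v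

theorem IsCAlg.span_two_smul_add_eq_top (hchar : (2 : F) ≠ 0) (h : IsCAlg F m α β γ e x y) :
    span F (Set.range ![x, y, (2 : F) • e + x + y]) = ⊤ := by
  set z := (2 : F) • e + x + y
  have hx : x ∈ span F (Set.range ![x, y, z]) := subset_span ⟨0, rfl⟩
  have hy : y ∈ span F (Set.range ![x, y, z]) := subset_span ⟨1, rfl⟩
  have hz : z ∈ span F (Set.range ![x, y, z]) := subset_span ⟨2, rfl⟩
  rw [eq_top_iff, ← h.2.1, span_le, Set.insert_subset_iff, Set.insert_subset_iff,
    Set.singleton_subset_iff]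
  refine ⟨(smul_mem_iff _ hchar).1 ?_, hx, hy⟩
  rw [show (2 : F) • e = z - x - y by module]
  exact sub_mem (sub_mem hz hx) hy

theorem IsCAlg.exists_nilBasis_neg_two (hchar : (2 : F) ≠ 0)
    (h : IsCAlg F m (-2) (-2) (-2) e x y) :
    ∃ b : Basis (Fin 3) F A, (∀ i, m (b i) (b i) = 0) ∧
      span F (Set.range (nilProducts m b)) = ⊤ := by
  let b := basisOfTopLeSpanOfCardEqFinrank _ (h.span_two_smul_add_eq_top hchar).ge
    (finrank_eq_card_basis h.basis_s17).symm
  have hb : ⇑b = ![x, y, (2 : F) • e + x + y] := coe_basisOfTopLeSpanOfCardEqFinrank _ _ _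
  have ⟨_, hspan, hel, her, hxx, hyy, hxy, hyx⟩ := h
  set z := (2 : F) • e + x + y
  -- `z² = 4(1 + x + y) + 2xy` vanishes exactly because `ρ = -2`
  have hzz : m z z = 0 := by simp [z, hel, her, hxx, hyy, hxy, hyx]; module
  have hxz : m x z = (-2 : F) • (e + y) := by simp [z, her, hxx, hxy]; module
  have hyz : m y z = (-2 : F) • (e + x) := by simp [z, her, hyy, hyx]
  refine ⟨b, fun i => ?_, ?_⟩
  · fin_cases i <;> simp [hb, hxx, hyy, hzz]
  have hP : (-2 : F) • (e + x + y) ∈ span F (Set.range (nilProducts m b)) :=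
    subset_span ⟨0, by simp [nilProducts, hb, hxy]⟩
  have hQ : (-2 : F) • (e + y) ∈ span F (Set.range (nilProducts m b)) :=
    subset_span ⟨1, by simp [nilProducts, hb, hxz]⟩
  have hR : (-2 : F) • (e + x) ∈ span F (Set.range (nilProducts m b)) :=
    subset_span ⟨2, by simp [nilProducts, hb, hyz]⟩
  have h2 : (-2 : F) ≠ 0 := neg_ne_zero.2 hchar
  rw [eq_top_iff, ← hspan, span_le, Set.insert_subset_iff, Set.insert_subset_iff,
    Set.singleton_subset_iff]
  refine ⟨(smul_mem_iff _ h2).1 ?_, (smul_mem_iff _ h2).1 ?_, (smul_mem_iff _ h2).1 ?_⟩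
  · rw [show (-2 : F) • e = (-2 : F) • (e + y) + (-2 : F) • (e + x) - (-2 : F) • (e + x + y) by
      module]
    exact sub_mem (add_mem hQ hR) hP
  · rw [show (-2 : F) • x = (-2 : F) • (e + x + y) - (-2 : F) • (e + y) by module]
    exact sub_mem hP hQ
  · rw [show (-2 : F) • y = (-2 : F) • (e + x + y) - (-2 : F) • (e + x) by module]
    exact sub_mem hP hR

end CAlg

theorem stmt17_general {F : Type*} [Field F] (hchar : (2 : F) ≠ 0)
    {A : Type*} [AddCommGroup A] [Module F A]
    (m : A →ₗ[F] A →ₗ[F] A)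
    (hcomm : ∀ u v : A, m u v = m v u)
    (hsimple : IsSimpleAlg F (fun u v : A => m u v))
    (hnilbasis : ∃ v : Fin 3 → A, LinearIndependent F v ∧
      Submodule.span F (Set.range v) = ⊤ ∧ ∀ i, m (v i) (v i) = 0)
    {B : Type*} [AddCommGroup B] [Module F B]
    (m' : B →ₗ[F] B →ₗ[F] B) (e' x' y' : B)
    (hB : IsCAlg F m' (-2) (-2) (-2) e' x' y') :
    ∃ f g : A ≃ₗ[F] A, (∃ c : F, c ≠ 0 ∧ ∀ u : A, g u = c • f u) ∧
      AlgIso F (fun u v : A => m (f u) (g v)) (fun u v : B => m' u v) := by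
  obtain ⟨n, hli, hspan, hnil⟩ := hnilbasis
  let a := Basis.mk hli hspan.ge
  have ha : ⇑a = n := Basis.coe_mk _ _
  obtain ⟨b, hnilB, hspanB⟩ := hB.exists_nilBasis_neg_two hchar
  obtain ⟨f, hf⟩ := exists_algIso_isotope_of_nilBasis hcomm hB.comm a b (ha ▸ hnil) hnilB
    (ha ▸ span_nilProducts_eq_top hsimple hcomm hspan hnil) hspanB
  exact ⟨f, f, ⟨1, one_ne_zero, fun u => (one_smul F _).symm⟩, hf⟩

/-- Over an algebraically closed field of characteristic `≠ 2`,
every simple commutative 3-dimensional algebra possessing a nil-basis (a basis of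
nil-elements of index 2) has a standard isotope isomorphic to `C(-2)` (where
`C(ρ)` has `xy = yx = ρ·(1 + x + y)`). -/
theorem stmt17 {F : Type*} [Field F] [IsAlgClosed F] (hchar : (2 : F) ≠ 0)
    {A : Type*} [AddCommGroup A] [Module F A]
    (m : A →ₗ[F] A →ₗ[F] A)
    (hdim : Module.finrank F A = 3)
    (hcomm : ∀ u v : A, m u v = m v u)
    (hsimple : IsSimpleAlg F (fun u v : A => m u v))
    (hnilbasis : ∃ v : Fin 3 → A, LinearIndependent F v ∧
      Submodule.span F (Set.range v) = ⊤ ∧ ∀ i, m (v i) (v i) = 0)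
    {B : Type*} [AddCommGroup B] [Module F B]
    (m' : B →ₗ[F] B →ₗ[F] B) (e' x' y' : B)
    (hB : IsCAlg F m' (-2) (-2) (-2) e' x' y') :
    ∃ f g : A ≃ₗ[F] A, (∃ c : F, c ≠ 0 ∧ ∀ u : A, g u = c • f u) ∧
      AlgIso F (fun u v : A => m (f u) (g v)) (fun u v : B => m' u v) :=
  stmt17_general hchar m hcomm hsimple hnilbasis m' e' x' y' hB
end
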